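/- arXiv:1910.00175 — 3 statements merged into one kernel-verified Lean document; each statement's English description precedes it below -/
import Mathlib

section
/- Let G be a group, K and B subgroups with G = KB, and h : B → ℝ a homomorphism vanishing on K ∩ B; let H : G → ℝ be the induced well-defined function H(kb) = h(b). Assume additionally that H(g k) = H(g) for every g ∈ G and every k ∈ K ∩ B. Then for all g₀, g₁ ∈ G and any κ(g₀) ∈ K appearing in a factorization g₀ = κ(g₀) b₀ with b₀ ∈ B, the twisted cocycle identity H(g₁ g₀) = H(g₀) + H(g₁ κ(g₀)) holds, and the value H(g₁ κ(g₀)) does not depend on the choice of κ(g₀). -/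
/-- Twisted cocycle identity `H(g₁g₀) = H(g₀) + H(g₁ κ(g₀))` for the Iwasawa-type
function `H(kb) = h(b)` on `G = KB`, together with independence of the choice of `κ(g₀)`. -/
theorem stmt1 {G : Type*} [Group G] (K B : Subgroup G) (h H : G → ℝ)
    (hKB : ∀ g : G, ∃ k ∈ K, ∃ b ∈ B, g = k * b)
    (hhom : ∀ b₁ ∈ B, ∀ b₂ ∈ B, h (b₁ * b₂) = h b₁ + h b₂)
    (hvanish : ∀ x : G, x ∈ K → x ∈ B → h x = 0)
    (hH : ∀ k ∈ K, ∀ b ∈ B, H (k * b) = h b)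
    (hinvar : ∀ g k : G, k ∈ K → k ∈ B → H (g * k) = H g) :
    ∀ g₀ g₁ κ b₀ : G, κ ∈ K → b₀ ∈ B → g₀ = κ * b₀ →
      H (g₁ * g₀) = H g₀ + H (g₁ * κ) ∧
        (∀ κ' b₀' : G, κ' ∈ K → b₀' ∈ B → g₀ = κ' * b₀' →
          H (g₁ * κ) = H (g₁ * κ')) := by
  have key : ∀ g b : G, b ∈ B → H (g * b) = H g + h b := by
    intro g b hb
    obtain ⟨k, hk, b', hb', rfl⟩ := hKB g
    rw [mul_assoc, hH k hk _ (mul_mem hb' hb), hH k hk _ hb', hhom b' hb' b hb]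
  intro g₀ g₁ κ b₀ hκ hb₀ hg₀
  constructor
  · rw [hg₀, ← mul_assoc, key _ _ hb₀, hH κ hκ b₀ hb₀]
    ring
  · intro κ' b₀' hκ' hb₀' hg₀'
    have hmem : κ⁻¹ * κ' = b₀ * b₀'⁻¹ := by
      have : κ * b₀ = κ' * b₀' := hg₀ ▸ hg₀'
      have h2 : κ' = κ * b₀ * b₀'⁻¹ := by rw [this]; group
      rw [h2]; group
    have hB : κ⁻¹ * κ' ∈ B := hmem ▸ mul_mem hb₀ (inv_mem hb₀')
    have hK : κ⁻¹ * κ' ∈ K := mul_mem (inv_mem hκ) hκ'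
    have := hinvar (g₁ * κ) (κ⁻¹ * κ') hK hB
    rw [mul_assoc] at this
    simp at this
    rw [← this]
end

section
/- Define φ(f₀, f₁) = ∫_ℝ x·f₀(−x)·f₁(x) dx for Schwartz functions on ℝ, and let * denote convolution, (f*g)(x) = ∫_ℝ f(y)g(x−y) dy. Then φ is a Hochschild cocycle for the convolution algebra: for all Schwartz functions f₀, f₁, f₂, φ(f₀*f₁, f₂) − φ(f₀, f₁*f₂) + φ(f₂*f₀, f₁) = 0. -/
/-!
Unfolding the convolution, `φ(f * g, h)` is the integral of `f(a) g(b) · c h(c)` over the plane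
`a + b + c = 0`. This integral is invariant under rotating `(a, b, c)` cyclically, so with
`φ(f, g) = -φ(g, f)` the three terms of `bφ(f₀, f₁, f₂)` become integrals of `f₀(a) f₁(b) f₂(c)`
against the weights `c`, `-a` and `b`, and `c - (-a) + b` vanishes on the plane.
-/

open MeasureTheory
open scoped SchwartzMap

/-- Convolution of functions on `ℝ`. -/
noncomputable def conv7 (f g : ℝ → ℂ) : ℝ → ℂ := fun x => ∫ y : ℝ, f y * g (x - y)

/-- The cochain `φ(f₀,f₁) = ∫ x f₀(-x) f₁(x) dx`. -/
noncomputable def phi7 (f g : ℝ → ℂ) : ℂ := ∫ x : ℝ, (x : ℂ) * f (-x) * g x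

/-- `f(a) g(b) h(c)` on the plane `a + b + c = 0`, parametrised by `(a, b)`. -/
noncomputable def tripleProd (f g h : ℝ → ℂ) (p : ℝ × ℝ) : ℂ := f p.1 * g p.2 * h (-p.1 - p.2)

/-- The rotation `(a, b, c) ↦ (c, a, b)` of the plane `a + b + c = 0`, in the coordinates
`(a, b)`. -/
def planeRotation : ℝ × ℝ ≃ᵐ ℝ × ℝ :=
  (MeasurableEquiv.shearAddRight ℝ).trans <|
    MeasurableEquiv.prodComm.trans <|
      MeasurableEquiv.prodCongr (MeasurableEquiv.neg ℝ) (MeasurableEquiv.refl ℝ)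

lemma planeRotation_apply (p : ℝ × ℝ) : planeRotation p = (-p.1 - p.2, p.1) := by
  change (-(p.1 + p.2), p.1) = _
  rw [neg_add']

lemma measurePreserving_planeRotation : MeasurePreserving planeRotation volume volume :=
  ((Measure.measurePreserving_neg volume).prod (MeasurePreserving.id volume)).comp
    (Measure.measurePreserving_swap.comp (measurePreserving_prod_add volume volume))

lemma tripleProd_planeRotation (f g h : ℝ → ℂ) (p : ℝ × ℝ) :
    tripleProd h f g (planeRotation p) = tripleProd f g h p := by
  rw [tripleProd, tripleProd, planeRotation_apply, show -(-p.1 - p.2) - p.1 = p.2 by ring]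
  ring

lemma integral_tripleProd_rotate (f g h : ℝ → ℂ) :
    ∫ p, tripleProd f g h p = ∫ p, tripleProd h f g p := by
  simp only [← tripleProd_planeRotation f g h,
    measurePreserving_planeRotation.integral_comp' (tripleProd h f g)]

lemma integrable_tripleProd {u v k : ℝ → ℂ} (hu : Integrable u) (hv : Integrable v)
    (hk : Continuous k) {C : ℝ} (hC : ∀ x, ‖k x‖ ≤ C) : Integrable (tripleProd u v k) :=
  (hu.mul_prod hv).mul_bdd (hk.comp (by fun_prop)).aestronglyMeasurable
    (ae_of_all _ fun _ ↦ hC _)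

lemma SchwartzMap.integrable_tripleProd (f g h : 𝓢(ℝ, ℂ)) : Integrable (tripleProd f g h) :=
  _root_.integrable_tripleProd f.integrable g.integrable h.continuous (h.norm_le_seminorm ℝ)

noncomputable def xMul (f : 𝓢(ℝ, ℂ)) : 𝓢(ℝ, ℂ) := SchwartzMap.smulLeftCLM ℂ (fun x : ℝ ↦ (x : ℂ)) f

lemma xMul_apply (f : 𝓢(ℝ, ℂ)) (x : ℝ) : xMul f x = x * f x := by
  simp [xMul, Function.Complex.hasTemperateGrowth_ofReal]

lemma tripleProd_xMul_sum_eq_zero (f g h : 𝓢(ℝ, ℂ)) (p : ℝ × ℝ) :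
    tripleProd f g (xMul h) p + tripleProd (xMul f) g h p + tripleProd f (xMul g) h p = 0 := by
  simp only [tripleProd, xMul_apply, Complex.ofReal_sub, Complex.ofReal_neg]
  ring

lemma phi7_antisymm (f g : ℝ → ℂ) : phi7 f g = -phi7 g f := by
  rw [phi7, phi7, ← integral_neg_eq_self, ← integral_neg]
  simp only [neg_neg, Complex.ofReal_neg]
  congr 1 with x
  ring

lemma phi7_conv7 (f g h : 𝓢(ℝ, ℂ)) :
    phi7 (conv7 f g) h = ∫ p, tripleProd f g (xMul h) p := by
  have hfiber (x : ℝ) : (x : ℂ) * conv7 f g (-x) * h x = ∫ y, tripleProd (xMul h) f g (x, y) := by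
    simp only [conv7, tripleProd, xMul_apply, ← integral_const_mul, ← integral_mul_const]
    congr 1 with y
    ring
  simp only [phi7, hfiber]
  rw [← integral_prod _ ((xMul h).integrable_tripleProd f g), ← Measure.volume_eq_prod,
    integral_tripleProd_rotate f g]

/-- `φ` is a Hochschild cocycle for the convolution algebra of Schwartz functions:
`φ(f₀*f₁, f₂) - φ(f₀, f₁*f₂) + φ(f₂*f₀, f₁) = 0`. -/
theorem stmt7 (f₀ f₁ f₂ : SchwartzMap ℝ ℂ) :
    phi7 (conv7 f₀ f₁) f₂ - phi7 f₀ (conv7 f₁ f₂) + phi7 (conv7 f₂ f₀) f₁ = 0 := by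
  have h₁ : phi7 (conv7 f₀ f₁) f₂ = ∫ p, tripleProd f₀ f₁ (xMul f₂) p := phi7_conv7 ..
  have h₂ : phi7 f₀ (conv7 f₁ f₂) = -∫ p, tripleProd (xMul f₀) f₁ f₂ p := by
    rw [phi7_antisymm, phi7_conv7, integral_tripleProd_rotate]
  have h₃ : phi7 (conv7 f₂ f₀) f₁ = ∫ p, tripleProd f₀ (xMul f₁) f₂ p := by
    rw [phi7_conv7, integral_tripleProd_rotate, integral_tripleProd_rotate]
  have hint := SchwartzMap.integrable_tripleProd
  rw [h₁, h₂, h₃, sub_neg_eq_add, ← integral_add (hint ..) (hint ..),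
    ← integral_add _ (hint ..)]
  · simp_rw [tripleProd_xMul_sum_eq_zero, integral_zero]
  · exact (hint ..).add (hint ..)
end

section
/- For the Bott projection P(z) = (1/(1+|z|²))·[[1, z̄],[z, |z|²]] on ℝ² ≅ ℂ (z = x + iy), the pairing integral satisfies |∫_{ℝ²} Tr( P·(∂ₓP·∂ᵧP − ∂ᵧP·∂ₓP) ) dx dy| = 2π. -/
attribute [local instance] Matrix.frobeniusNormedAddCommGroup Matrix.frobeniusNormedSpace

/-- The Bott projection `P(z) = (1/(1+|z|²)) [[1, z̄],[z, |z|²]]`. -/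
noncomputable def BottP16 (z : ℂ) : Matrix (Fin 2) (Fin 2) ℂ :=
  ((1 + Complex.normSq z : ℂ)⁻¹) •
    !![1, (starRingEnd ℂ) z; z, (Complex.normSq z : ℂ)]

/-- The derivative of `P` in the direction of the real coordinate `x`. -/
noncomputable def BottPx (z : ℂ) : Matrix (Fin 2) (Fin 2) ℂ :=
  fderiv ℝ BottP16 z 1

/-- The derivative of `P` in the direction of the real coordinate `y`. -/
noncomputable def BottPy (z : ℂ) : Matrix (Fin 2) (Fin 2) ℂ :=
  fderiv ℝ BottP16 z Complex.I

/-!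
With `u = (1 + |z|²)⁻¹` and `M = [[1, z̄], [z, |z|²]]`, so that `P = u M`, the product rule gives
the real derivative of `P` in the direction `v` as `u (N_v - u n_v M)`, where
`n_v = z̄ v + z v̄` is the derivative of `|z|²` and `N_v = [[0, v̄], [v, n_v]]` that of `M`.
Treating `z` and `z̄` as independent variables, `Tr (P [dP v, dP w]) = (v̄ w - v w̄) u²` is a
rational identity; for `v = 1`, `w = i` the integrand is `2i / (1 + |z|²)²`, whose integral is
`2i · π` by polar coordinates.
-/

open Complex ComplexConjugate Matrix MeasureTheory Real Set

section MatrixDeriv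

variable {𝕜 𝕜' E m n : Type*} [NontriviallyNormedField 𝕜] [NontriviallyNormedField 𝕜']
  [NormedAlgebra 𝕜 𝕜'] [NormedAddCommGroup E] [NormedSpace 𝕜 E]
  [Fintype m] [Fintype n] [DecidableEq m] [DecidableEq n]

theorem hasFDerivAt_matrix {f : E → Matrix m n 𝕜'} {f' : m → n → E →L[𝕜] 𝕜'} {x : E}
    (h : ∀ i j, HasFDerivAt (fun y => f y i j) (f' i j) x) :
    HasFDerivAt f (∑ i, ∑ j, (f' i j).smulRight (single i j (1 : 𝕜'))) x := by
  have hf : f = fun y => ∑ i, ∑ j, f y i j • single i j (1 : 𝕜') := by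
    funext y
    simpa [smul_single] using matrix_eq_sum_single (f y)
  rw [hf]
  exact HasFDerivAt.fun_sum fun i _ => HasFDerivAt.fun_sum fun j _ =>
    (h i j).smul_const (single i j (1 : 𝕜'))

theorem sum_smulRight_single_apply (f' : m → n → E →L[𝕜] 𝕜') (v : E) :
    (∑ i, ∑ j, (f' i j).smulRight (single i j (1 : 𝕜'))) v = of fun i j => f' i j v := by
  ext i j
  simp [Matrix.sum_apply, single_apply, ite_and]

end MatrixDeriv

theorem one_add_normSq_ne_zero (z : ℂ) : (1 + normSq z : ℂ) ≠ 0 := by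
  exact_mod_cast (by linarith [normSq_nonneg z] : (0 : ℝ) < 1 + normSq z).ne'

theorem hasFDerivAt_ofReal_normSq (z : ℂ) :
    HasFDerivAt (fun w : ℂ => (normSq w : ℂ))
      (z • conjCLE.toContinuousLinearMap + conj z • ContinuousLinearMap.id ℝ ℂ) z := by
  simp_rw [← mul_conj]
  exact (hasFDerivAt_id z).mul conjCLE.hasFDerivAt

noncomputable def bottDeriv (z v : ℂ) : Matrix (Fin 2) (Fin 2) ℂ :=
  (1 + normSq z : ℂ)⁻¹ • (!![0, conj v; v, conj z * v + z * conj v] -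
    ((1 + normSq z : ℂ)⁻¹ * (conj z * v + z * conj v)) • !![1, conj z; z, (normSq z : ℂ)])

theorem fderiv_bottP16_apply (z v : ℂ) : fderiv ℝ BottP16 z v = bottDeriv z v := by
  have hN := hasFDerivAt_ofReal_normSq z
  have hu : HasFDerivAt (fun w : ℂ => (1 + normSq w : ℂ)⁻¹) _ z :=
    (hasFDerivAt_inv' (𝕜 := ℝ) (one_add_normSq_ne_zero z)).comp z (hN.const_add 1)
  have hM : ∀ i j, HasFDerivAt (fun w : ℂ => !![1, conj w; w, (normSq w : ℂ)] i j)
      (![![0, conjCLE.toContinuousLinearMap], ![ContinuousLinearMap.id ℝ ℂ,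
        z • conjCLE.toContinuousLinearMap + conj z • ContinuousLinearMap.id ℝ ℂ]] i j) z := by
    intro i j
    fin_cases i <;> fin_cases j
    · exact hasFDerivAt_const _ _
    · exact conjCLE.hasFDerivAt
    · exact hasFDerivAt_id z
    · exact hN
  rw [(hasFDerivAt_matrix (f := BottP16) fun i j => hu.fun_mul (hM i j)).fderiv,
    sum_smulRight_single_apply]
  ext i j
  fin_cases i <;> fin_cases j <;> simp [bottDeriv] <;>
    field_simp [one_add_normSq_ne_zero z] <;> ring

theorem trace_bottP16_mul_commutator (z v w : ℂ) :
    (BottP16 z * (bottDeriv z v * bottDeriv z w - bottDeriv z w * bottDeriv z v)).trace =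
      (conj v * w - v * conj w) / (1 + normSq z) ^ 2 := by
  have hz := one_add_normSq_ne_zero z
  rw [← mul_conj] at hz
  simp only [BottP16, bottDeriv, ← mul_conj, trace_fin_two, mul_apply, Fin.sum_univ_two,
    Matrix.sub_apply, Matrix.smul_apply, smul_eq_mul, of_apply, cons_val', cons_val_zero,
    cons_val_one, empty_val', cons_val_fin_one]
  field_simp
  ring

theorem integral_complex_fun_norm {F : Type*} [NormedAddCommGroup F] [NormedSpace ℝ F]
    (f : ℝ → F) : ∫ z : ℂ, f ‖z‖ = (2 * π) • ∫ r in Ioi (0 : ℝ), r • f r := by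
  have hball : volume.real (Metric.ball (0 : ℂ) 1) = π := by
    simp [Measure.real, Complex.volume_ball]
  rw [integral_fun_norm_addHaar, Complex.finrank_real_complex, hball, ← Nat.cast_smul_eq_nsmul ℝ,
    smul_smul]
  norm_num

theorem integral_Ioi_mul_inv_one_add_sq_sq :
    ∫ r in Ioi (0 : ℝ), r * ((1 + r ^ 2) ^ 2)⁻¹ = 1 / 2 := by
  have hderiv : ∀ r ∈ Ici (0 : ℝ),
      HasDerivAt (fun t : ℝ => -(1 + t ^ 2)⁻¹ / 2) (r * ((1 + r ^ 2) ^ 2)⁻¹) r := by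
    intro r _
    have h : HasDerivAt (fun t : ℝ => -(1 + t ^ 2)⁻¹ / 2) _ r :=
      ((((hasDerivAt_pow 2 r).const_add 1).inv (by positivity)).neg).div_const 2
    convert h using 1
    field_simp
    ring
  have hnonneg : ∀ r ∈ Ioi (0 : ℝ), 0 ≤ r * ((1 + r ^ 2) ^ 2)⁻¹ := fun r hr =>
    mul_nonneg (le_of_lt hr) (by positivity)
  have hlim : Filter.Tendsto (fun t : ℝ => -(1 + t ^ 2)⁻¹ / 2) Filter.atTop (nhds 0) := by
    simpa using ((tendsto_inv_atTop_zero.comp (Filter.tendsto_atTop_add_const_left _ 1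
      (Filter.tendsto_pow_atTop (α := ℝ) two_ne_zero))).neg.div_const 2)
  rw [integral_Ioi_of_hasDerivAt_of_nonneg' hderiv hnonneg hlim]
  norm_num

theorem integral_inv_one_add_normSq_sq : ∫ z : ℂ, ((1 + normSq z) ^ 2)⁻¹ = π := by
  simp_rw [normSq_eq_norm_sq]
  rw [integral_complex_fun_norm (fun r => ((1 + r ^ 2) ^ 2)⁻¹)]
  simp only [smul_eq_mul, integral_Ioi_mul_inv_one_add_sq_sq]
  ring

/-- The index pairing of the fundamental degree-2 cyclic cocycle with the Bott
projection: `|∫_{ℝ²} Tr(P (∂ₓP ∂ᵧP - ∂ᵧP ∂ₓP))| = 2π`. -/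
theorem stmt16 :
    ‖∫ z : ℂ, (BottP16 z * (BottPx z * BottPy z - BottPy z * BottPx z)).trace‖ =
      2 * Real.pi := by
  have htrace (z : ℂ) :
      (BottP16 z * (BottPx z * BottPy z - BottPy z * BottPx z)).trace =
        2 * I * (((1 + normSq z) ^ 2)⁻¹ : ℝ) := by
    rw [BottPx, BottPy, fderiv_bottP16_apply, fderiv_bottP16_apply, trace_bottP16_mul_commutator]
    simp only [map_one, conj_I]
    push_cast
    ring
  simp_rw [htrace]
  rw [integral_const_mul, integral_complex_ofReal, integral_inv_one_add_normSq_sq]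
  simp [pi_pos.le]
end
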